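/- arXiv:2402.09056 — 2 statements merged into one kernel-verified Lean document; each statement's English description precedes it below -/
import Mathlib

section
/- Let γ ∈ ℝ, ν > 0, α > 1, β > 0, and let NIG(μ, σ² | γ, ν, α, β) = (√ν / √(2πσ²)) · (β^α / Γ(α)) · (1/σ²)^{α+1} · exp(−(2β + ν(μ − γ)²)/(2σ²)) be the normal-inverse-Gamma density. Then for every y ∈ ℝ, ∫_0^∞ ∫_{−∞}^∞ N(y | μ, σ²) · NIG(μ, σ² | γ, ν, α, β) dμ dσ² = (Γ(1/2 + α)/Γ(α)) · √(ν/π) · (2β(1+ν))^α · (ν(y − γ)² + 2β(1+ν))^{−(1/2 + α)}, i.e., the predictive distribution is a Student's-t distribution with location γ, scale β(1+ν)/(να), and 2α degrees of freedom. -/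
open MeasureTheory Real

/-- The Gaussian density `N(y | μ, σ²) = (2πσ²)^{-1/2} exp(-(y-μ)²/(2σ²))`. -/
noncomputable def gaussianDensity (y μ s : ℝ) : ℝ :=
  (2 * Real.pi * s) ^ (-(1 : ℝ) / 2) * Real.exp (-(y - μ) ^ 2 / (2 * s))

/-- The normal-inverse-Gamma density
`NIG(μ, σ² | γ, ν, α, β) = (√ν / √(2πσ²)) (β^α / Γ(α)) (1/σ²)^{α+1}
  exp(-(2β + ν(μ-γ)²)/(2σ²))`. -/
noncomputable def nigDensity (μ s γ ν α β : ℝ) : ℝ :=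
  (Real.sqrt ν / Real.sqrt (2 * Real.pi * s)) * (β ^ α / Real.Gamma α) *
    (1 / s) ^ (α + 1) * Real.exp (-(2 * β + ν * (μ - γ) ^ 2) / (2 * s))

lemma integral_inv_gamma {a k : ℝ} (ha : 0 < a) (hk : 0 < k) :
    ∫ s in Set.Ioi (0:ℝ), s ^ (-(a+1)) * Real.exp (-(k/s)) = (1/k) ^ a * Real.Gamma a := by
  rw [← integral_rpow_mul_exp_neg_mul_Ioi ha hk,
    ← integral_comp_rpow_Ioi (fun u => u ^ (a-1) * Real.exp (-(k*u))) (p := -1) (by norm_num)]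
  refine setIntegral_congr_fun measurableSet_Ioi (fun x hx => ?_) |>.symm
  have hx' : (0:ℝ) < x := hx
  rw [smul_eq_mul, Real.rpow_neg_one, Real.inv_rpow hx'.le, ← Real.rpow_neg hx'.le]
  rw [show k * x⁻¹ = k / x from (div_eq_mul_inv k x).symm]
  rw [abs_neg, abs_one, one_mul, ← mul_assoc, ← Real.rpow_add hx']
  congr 2
  ring

lemma inner_int (γ ν α β : ℝ) (hν : 0 < ν) (hα0 : 0 < α) (hβ : 0 < β) (y s : ℝ)
    (hs : 0 < s) :
    (∫ μ : ℝ, gaussianDensity y μ s * nigDensity μ s γ ν α β)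
      = (Real.sqrt ν / Real.sqrt (1+ν) / Real.sqrt (2*Real.pi) * (β ^ α / Real.Gamma α)) *
        (s ^ (-(α + 1/2 + 1)) *
          Real.exp (-((ν*(y-γ)^2 + 2*β*(1+ν))/(1+ν)/2/s))) := by
  have h1ν : (0:ℝ) < 1+ν := by linarith
  have hπ : (0:ℝ) < Real.pi := Real.pi_pos
  set K : ℝ := (2*Real.pi*s) ^ (-(1:ℝ)/2) * (Real.sqrt ν / Real.sqrt (2*Real.pi*s)) *
      (β^α / Real.Gamma α) * (1/s)^(α+1) *
      Real.exp (-((ν*(y-γ)^2 + 2*β*(1+ν))/(1+ν)/2/s)) with hK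
  have key : ∀ μ : ℝ, gaussianDensity y μ s * nigDensity μ s γ ν α β
      = K * Real.exp (-(((1+ν)/(2*s)) * (μ - (y+ν*γ)/(1+ν))^2)) := by
    intro μ
    rw [hK, gaussianDensity, nigDensity]
    have he : Real.exp (-(y-μ)^2/(2*s)) * Real.exp (-(2*β + ν*(μ-γ)^2)/(2*s))
        = Real.exp (-((ν*(y-γ)^2 + 2*β*(1+ν))/(1+ν)/2/s)) *
          Real.exp (-(((1+ν)/(2*s)) * (μ - (y+ν*γ)/(1+ν))^2)) := by
      rw [← Real.exp_add, ← Real.exp_add, Real.exp_eq_exp]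
      field_simp
      ring
    calc (2*Real.pi*s) ^ (-(1:ℝ)/2) * Real.exp (-(y-μ)^2/(2*s)) *
          ((Real.sqrt ν / Real.sqrt (2*Real.pi*s)) * (β^α / Real.Gamma α) *
            (1/s)^(α+1) * Real.exp (-(2*β + ν*(μ-γ)^2)/(2*s)))
        = ((2*Real.pi*s) ^ (-(1:ℝ)/2) * (Real.sqrt ν / Real.sqrt (2*Real.pi*s)) *
            (β^α / Real.Gamma α) * (1/s)^(α+1)) *
          (Real.exp (-(y-μ)^2/(2*s)) * Real.exp (-(2*β + ν*(μ-γ)^2)/(2*s))) := by ring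
      _ = _ := by rw [he]; ring
  calc (∫ μ : ℝ, gaussianDensity y μ s * nigDensity μ s γ ν α β)
      = ∫ μ : ℝ, K * Real.exp (-(((1+ν)/(2*s)) * (μ - (y+ν*γ)/(1+ν))^2)) :=
        integral_congr_ae (Filter.Eventually.of_forall key)
    _ = K * ∫ μ : ℝ, Real.exp (-(((1+ν)/(2*s)) * (μ - (y+ν*γ)/(1+ν))^2)) :=
        integral_const_mul _ _
    _ = K * ∫ μ : ℝ, Real.exp (-(((1+ν)/(2*s)) * μ^2)) := by
        rw [integral_sub_right_eq_self (μ := volume)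
          (fun μ => Real.exp (-(((1+ν)/(2*s)) * μ^2))) ((y+ν*γ)/(1+ν))]
    _ = K * Real.sqrt (Real.pi / ((1+ν)/(2*s))) := by
        simp_rw [← neg_mul]
        rw [integral_gaussian]
    _ = _ := by
        rw [hK]
        have e1 : Real.sqrt (2*Real.pi*s) = Real.sqrt (2*Real.pi) * Real.sqrt s :=
          Real.sqrt_mul (by positivity) s
        have e2 : (2*Real.pi*s : ℝ) ^ (-(1:ℝ)/2)
            = (Real.sqrt (2*Real.pi) * Real.sqrt s)⁻¹ := by
          rw [show (-(1:ℝ)/2) = -(1/2 : ℝ) by norm_num, Real.rpow_neg (by positivity),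
            ← Real.sqrt_eq_rpow, e1]
        have e3 : ((1:ℝ)/s) ^ (α+1) = (s ^ (α+1))⁻¹ := by
          rw [one_div, Real.inv_rpow hs.le]
        have e4 : Real.sqrt (Real.pi / ((1+ν)/(2*s)))
            = Real.sqrt (2*Real.pi) * Real.sqrt s / Real.sqrt (1+ν) := by
          rw [show Real.pi / ((1+ν)/(2*s)) = (2*Real.pi*s) / (1+ν) from by
            field_simp, Real.sqrt_div (by positivity), e1]
        have e5 : s ^ (-(α + 1/2 + 1)) = (s ^ (α+1) * Real.sqrt s)⁻¹ := by
          rw [Real.sqrt_eq_rpow, ← Real.rpow_add hs, ← Real.rpow_neg hs.le]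
          congr 1
          ring
        rw [e2, e3, e4, e5, e1]
        have hS2π : Real.sqrt (2*Real.pi) ≠ 0 := by positivity
        have hSs : Real.sqrt s ≠ 0 := by positivity
        have hS1ν : Real.sqrt (1+ν) ≠ 0 := by positivity
        have hsa : s ^ (α+1) ≠ 0 := (Real.rpow_pos_of_pos hs _).ne'
        have hΓ : Real.Gamma α ≠ 0 := (Real.Gamma_pos_of_pos hα0).ne'
        field_simp

/-- **Predictive distribution of a Gaussian likelihood under a normal-inverse-Gamma prior.**
For `γ ∈ ℝ`, `ν > 0`, `α > 1`, `β > 0` and every `y ∈ ℝ`,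
`∫_0^∞ ∫_ℝ N(y | μ, σ²) NIG(μ, σ² | γ, ν, α, β) dμ dσ²
  = (Γ(1/2 + α)/Γ(α)) √(ν/π) (2β(1+ν))^α (ν(y-γ)² + 2β(1+ν))^{-(1/2+α)}`,
i.e. the predictive distribution is Student's-t with location `γ`, scale `β(1+ν)/(να)`
and `2α` degrees of freedom. -/
theorem nig_predictive_studentT (γ ν α β : ℝ) (hν : 0 < ν) (hα : 1 < α) (hβ : 0 < β)
    (y : ℝ) :
    (∫ s in Set.Ioi (0 : ℝ), ∫ μ : ℝ, gaussianDensity y μ s * nigDensity μ s γ ν α β)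
      = (Real.Gamma (1 / 2 + α) / Real.Gamma α) * Real.sqrt (ν / Real.pi) *
          (2 * β * (1 + ν)) ^ α *
          (ν * (y - γ) ^ 2 + 2 * β * (1 + ν)) ^ (-(1 / 2 + α)) := by
  have hα0 : (0:ℝ) < α := by linarith
  have h1ν : (0:ℝ) < 1+ν := by linarith
  have hπ : (0:ℝ) < Real.pi := Real.pi_pos
  have hD : (0:ℝ) < ν*(y-γ)^2 + 2*β*(1+ν) := by positivity
  have hk : (0:ℝ) < (ν*(y-γ)^2 + 2*β*(1+ν))/(1+ν)/2 := by positivity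
  have ha : (0:ℝ) < α + 1/2 := by linarith
  rw [setIntegral_congr_fun measurableSet_Ioi
    (fun s hs => inner_int γ ν α β hν hα0 hβ y s hs), integral_const_mul,
    integral_inv_gamma ha hk]
  have h1 : (1/((ν*(y-γ)^2+2*β*(1+ν))/(1+ν)/2)) =
      2*(1+ν)/(ν*(y-γ)^2+2*β*(1+ν)) := by
    field_simp
  rw [h1, Real.div_rpow (by positivity) hD.le]
  have h3 : (ν*(y-γ)^2+2*β*(1+ν)) ^ (-(1/2+α))
      = ((ν*(y-γ)^2+2*β*(1+ν)) ^ (α+1/2))⁻¹ := by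
    rw [show (-(1/2+α) : ℝ) = -(α+1/2) from by ring, Real.rpow_neg hD.le]
  have h4 : (2*β*(1+ν):ℝ)^α = 2^α * β^α * (1+ν)^α := by
    rw [Real.mul_rpow (by positivity) h1ν.le, Real.mul_rpow (by norm_num) hβ.le]
  have h5 : (2*(1+ν):ℝ)^(α+1/2)
      = 2^α*(1+ν)^α*(Real.sqrt 2 * Real.sqrt (1+ν)) := by
    rw [Real.rpow_add (by positivity), Real.mul_rpow (by norm_num) h1ν.le,
      Real.mul_rpow (by norm_num) h1ν.le, ← Real.sqrt_eq_rpow, ← Real.sqrt_eq_rpow]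
  have h6 : Real.sqrt (ν/Real.pi) = Real.sqrt ν / Real.sqrt Real.pi :=
    Real.sqrt_div hν.le _
  have h7 : Real.sqrt (2*Real.pi) = Real.sqrt 2 * Real.sqrt Real.pi :=
    Real.sqrt_mul (by norm_num) _
  have h8 : Real.Gamma (1/2+α) = Real.Gamma (α+1/2) := by rw [add_comm]
  rw [h3, h4, h5, h6, h7, h8]
  have n1 : Real.sqrt 2 ≠ 0 := by positivity
  have n2 : Real.sqrt Real.pi ≠ 0 := by positivity
  have n3 : Real.sqrt (1+ν) ≠ 0 := by positivity
  have n4 : Real.Gamma α ≠ 0 := (Real.Gamma_pos_of_pos hα0).ne'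
  have n5 : ((ν*(y-γ)^2+2*β*(1+ν)) : ℝ) ^ (α+1/2) ≠ 0 :=
    (Real.rpow_pos_of_pos hD _).ne'
  field_simp
end

section
/- (Closed-form outer loss for regression.) Let γ ∈ ℝ, ν > 0, α > 1, β > 0, and let NIG(μ, σ² | γ, ν, α, β) be the normal-inverse-Gamma density. Then for every y ∈ ℝ, the expected Gaussian log-likelihood under the normal-inverse-Gamma distribution satisfies ∫_0^∞ ∫_{−∞}^∞ log N(y | μ, σ²) · NIG(μ, σ² | γ, ν, α, β) dμ dσ² = (1/2)(−(α/β)(y − γ)² − 1/ν + ψ(α) − log β − log(2π)), where ψ is the digamma function. -/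
open MeasureTheory Real

/-- The digamma function `ψ(z) = Γ'(z)/Γ(z)`. -/
noncomputable def digamma (z : ℝ) : ℝ := deriv Real.Gamma z / Real.Gamma z

section Helpers
open Set



lemma hasDerivAt_realGamma {α : ℝ} (hα : 0 < α) :
    HasDerivAt Real.Gamma (∫ t in Ioi (0:ℝ), t ^ (α-1) * (Real.log t * Real.exp (-t))) α := by
  have h1 : HasDerivAt Complex.GammaIntegral
      (∫ t : ℝ in Ioi 0, (t:ℂ) ^ ((α:ℂ) - 1) * (Real.log t * Real.exp (-t))) α :=
    Complex.hasDerivAt_GammaIntegral (by simpa using hα)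
  have heq : Complex.Gamma =ᶠ[nhds (α:ℂ)] Complex.GammaIntegral := by
    have hopen : IsOpen {z : ℂ | 0 < z.re} := isOpen_lt continuous_const Complex.continuous_re
    filter_upwards [hopen.mem_nhds (by simpa using hα)] with z hz
    exact Complex.Gamma_eq_integral hz
  have h2 : HasDerivAt Complex.Gamma
      (∫ t : ℝ in Ioi 0, (t:ℂ) ^ ((α:ℂ) - 1) * (Real.log t * Real.exp (-t))) α :=
    h1.congr_of_eventuallyEq heq
  have h3 := h2.real_of_complex
  have cc : ∀ r : ℝ, Complex.ofReal r = @RCLike.ofReal ℂ _ r := fun r => rfl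
  have hI : (∫ t : ℝ in Ioi 0, (t:ℂ) ^ ((α:ℂ) - 1) * (Real.log t * Real.exp (-t)))
      = ((∫ t in Ioi (0:ℝ), t ^ (α-1) * (Real.log t * Real.exp (-t)) : ℝ) : ℂ) := by
    have step : (∫ t : ℝ in Ioi 0, (t:ℂ) ^ ((α:ℂ) - 1) * (Real.log t * Real.exp (-t)))
        = ∫ t in Ioi (0:ℝ), ((t ^ (α-1) * (Real.log t * Real.exp (-t)) : ℝ) : ℂ) := by
      refine setIntegral_congr_fun measurableSet_Ioi (fun t ht => ?_)
      rw [show ((α:ℂ)-1) = ((α-1:ℝ):ℂ) by push_cast; ring,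
        ← Complex.ofReal_cpow (le_of_lt ht)]
      push_cast
      ring
    rw [step]
    conv_lhs => enter [2, t]; rw [cc]
    rw [_root_.integral_ofReal, ← cc]
  rw [hI] at h3
  simp only [Complex.ofReal_re] at h3
  exact h3


lemma integrableOn_log_rpow_exp {α : ℝ} (hα : 1 < α) :
    IntegrableOn (fun t => Real.log t * t ^ (α-1) * Real.exp (-t)) (Ioi (0:ℝ)) := by
  have h0 : (Ioc (0:ℝ) 1) ∪ (Ioi 1) = Ioi 0 := Ioc_union_Ioi_eq_Ioi zero_le_one
  rw [← h0]
  have hmeas : AEStronglyMeasurable (fun t => Real.log t * t ^ (α-1) * Real.exp (-t))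
      (volume : Measure ℝ) := by
    apply Measurable.aestronglyMeasurable
    exact (Real.measurable_log.mul (by fun_prop)).mul (by fun_prop)
  apply IntegrableOn.union
  · -- on Ioc 0 1
    have hint : IntegrableOn (fun t : ℝ => 2 * t ^ (α - 3/2)) (Ioc (0:ℝ) 1) := by
      apply Integrable.const_mul
      have := intervalIntegral.intervalIntegrable_rpow' (a := 0) (b := 1)
        (show (-1:ℝ) < α - 3/2 by linarith)
      rwa [intervalIntegrable_iff, uIoc_of_le zero_le_one] at this
    refine Integrable.mono' hint hmeas.restrict ?_
    rw [ae_restrict_iff' measurableSet_Ioc]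
    refine ae_of_all _ (fun t ht => ?_)
    obtain ⟨ht0, ht1⟩ := ht
    have hlog : |Real.log t| ≤ 2 * t ^ (-(1:ℝ)/2) := by
      rw [abs_of_nonpos (Real.log_nonpos ht0.le ht1)]
      have h1 : Real.log (t ^ (-(1:ℝ)/2)) ≤ t ^ (-(1:ℝ)/2) - 1 :=
        Real.log_le_sub_one_of_pos (rpow_pos_of_pos ht0 _)
      rw [Real.log_rpow ht0] at h1
      nlinarith [rpow_pos_of_pos ht0 (-(1:ℝ)/2)]
    have hexp : Real.exp (-t) ≤ 1 := by
      rw [Real.exp_le_one_iff]; linarith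
    have hr : (0:ℝ) < t ^ (α-1) := rpow_pos_of_pos ht0 _
    calc ‖Real.log t * t ^ (α-1) * Real.exp (-t)‖
        = |Real.log t| * t ^ (α-1) * Real.exp (-t) := by
          rw [norm_eq_abs, abs_mul, abs_mul, abs_of_pos hr, abs_of_pos (exp_pos _)]
      _ ≤ (2 * t ^ (-(1:ℝ)/2)) * t ^ (α-1) * 1 := by
          apply mul_le_mul (mul_le_mul_of_nonneg_right hlog hr.le) hexp (exp_pos _).le
          positivity
      _ = 2 * t ^ (α - 3/2) := by
          rw [mul_one, mul_assoc, ← Real.rpow_add ht0]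
          congr 1
          ring
  · -- on Ioi 1
    have hint : IntegrableOn (fun t : ℝ => Real.exp (-t) * t ^ (α+1-1)) (Ioi (1:ℝ)) :=
      (Real.GammaIntegral_convergent (by linarith : (0:ℝ) < α+1)).mono_set
        (Ioi_subset_Ioi zero_le_one)
    refine Integrable.mono' hint hmeas.restrict ?_
    rw [ae_restrict_iff' measurableSet_Ioi]
    refine ae_of_all _ (fun t ht => ?_)
    have ht1 : (1:ℝ) < t := ht
    have ht0 : (0:ℝ) < t := by linarith
    have hlog : |Real.log t| ≤ t := by
      rw [abs_of_nonneg (Real.log_nonneg ht1.le)]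
      linarith [Real.log_le_sub_one_of_pos ht0]
    have hr : (0:ℝ) < t ^ (α-1) := rpow_pos_of_pos ht0 _
    calc ‖Real.log t * t ^ (α-1) * Real.exp (-t)‖
        = |Real.log t| * t ^ (α-1) * Real.exp (-t) := by
          rw [norm_eq_abs, abs_mul, abs_mul, abs_of_pos hr, abs_of_pos (exp_pos _)]
      _ ≤ t * t ^ (α-1) * Real.exp (-t) := by
          apply mul_le_mul_of_nonneg_right (mul_le_mul_of_nonneg_right hlog hr.le) (exp_pos _).le
      _ = Real.exp (-t) * t ^ (α+1-1) := by
          rw [show α+1-1 = 1+(α-1) by ring, Real.rpow_add ht0, Real.rpow_one]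
          ring


-- value: ∫ t^q e^{-βt}
lemma int_rpow_exp_val {β : ℝ} (hβ : 0 < β) {q : ℝ} (hq : -1 < q) :
    ∫ t in Ioi (0:ℝ), t ^ q * Real.exp (-(β * t)) = β ^ (-(q+1)) * Real.Gamma (q+1) := by
  have h := integral_rpow_mul_exp_neg_mul_rpow (p := 1) one_pos hq hβ
  have h2 : (∫ x in Ioi (0:ℝ), x ^ q * Real.exp (-β * x ^ (1:ℝ)))
      = ∫ t in Ioi (0:ℝ), t ^ q * Real.exp (-(β * t)) := by
    refine setIntegral_congr_fun measurableSet_Ioi (fun x hx => ?_)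
    rw [Real.rpow_one, neg_mul]
  rw [h2] at h
  rw [h]
  norm_num

-- integrability: t^q e^{-βt}
lemma int_rpow_exp_integrable {β : ℝ} (hβ : 0 < β) {q : ℝ} (hq : -1 < q) :
    IntegrableOn (fun t => t ^ q * Real.exp (-(β * t))) (Ioi (0:ℝ)) := by
  have h0 : IntegrableOn (fun u => Real.exp (-u) * u ^ (q+1-1)) (Ioi (0:ℝ)) :=
    Real.GammaIntegral_convergent (by linarith)
  have h1 := (integrableOn_Ioi_comp_mul_left_iff (fun u => Real.exp (-u) * u ^ (q+1-1)) 0 hβ).2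
  rw [mul_zero] at h1
  have h2 := (h1 h0).const_mul (β ^ (-q))
  refine IntegrableOn.congr_fun h2 (fun x hx => ?_) measurableSet_Ioi
  have hx0 : (0:ℝ) < x := hx
  rw [add_sub_cancel_right, Real.mul_rpow hβ.le hx0.le]
  rw [show β ^ (-q) * (Real.exp (-(β * x)) * (β ^ q * x ^ q))
      = (β ^ (-q) * β ^ q) * (x ^ q * Real.exp (-(β * x))) by ring,
    ← Real.rpow_add hβ]
  norm_num

-- integrability: log t * t^(α-1) e^{-βt}
lemma int_log_rpow_exp_integrable {α β : ℝ} (hα : 1 < α) (hβ : 0 < β) :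
    IntegrableOn (fun t => Real.log t * t ^ (α-1) * Real.exp (-(β * t))) (Ioi (0:ℝ)) := by
  have h1 := (integrableOn_Ioi_comp_mul_left_iff
    (fun u => Real.log u * u ^ (α-1) * Real.exp (-u)) 0 hβ).2
  rw [mul_zero] at h1
  have h2 := ((h1 (integrableOn_log_rpow_exp hα)).const_mul (β ^ (1-α))).sub
    ((int_rpow_exp_integrable hβ (by linarith : (-1:ℝ) < α-1)).const_mul (Real.log β))
  refine IntegrableOn.congr_fun h2 (fun x hx => ?_) measurableSet_Ioi
  have hx0 : (0:ℝ) < x := hx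
  have hb : β ^ (1-α) * β ^ (α-1) = 1 := by
    rw [← Real.rpow_add hβ]; norm_num
  simp only [Pi.sub_apply]
  rw [Real.log_mul hβ.ne' hx0.ne', Real.mul_rpow hβ.le hx0.le]
  linear_combination ((Real.log β + Real.log x) * (x ^ (α-1) * Real.exp (-(β*x)))) * hb

-- value: log t * t^(α-1) e^{-βt}
lemma int_log_rpow_exp_val {α β : ℝ} (hα : 1 < α) (hβ : 0 < β) :
    ∫ t in Ioi (0:ℝ), Real.log t * t ^ (α-1) * Real.exp (-(β * t))
      = β ^ (-α) * (deriv Real.Gamma α - Real.log β * Real.Gamma α) := by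
  have hα0 : (0:ℝ) < α := by linarith
  have hg := integral_comp_mul_left_Ioi
    (fun u => Real.log u * u ^ (α-1) * Real.exp (-u)) 0 hβ
  rw [mul_zero] at hg
  -- RHS of hg : β⁻¹ • ∫ = β⁻¹ * Γ'(α)
  have hGamma' : (∫ u in Ioi (0:ℝ), Real.log u * u ^ (α-1) * Real.exp (-u))
      = deriv Real.Gamma α := by
    rw [(hasDerivAt_realGamma hα0).deriv]
    refine setIntegral_congr_fun measurableSet_Ioi (fun t ht => ?_)
    ring
  -- LHS of hg : split
  have hA := int_rpow_exp_val hβ (by linarith : (-1:ℝ) < α-1)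
  rw [show α-1+1 = α by ring] at hA
  have hsplit : (∫ x in Ioi (0:ℝ), Real.log (β * x) * (β * x) ^ (α-1) * Real.exp (-(β * x)))
      = ∫ x in Ioi (0:ℝ), ((β ^ (α-1) * Real.log β) * (x ^ (α-1) * Real.exp (-(β * x)))
          + β ^ (α-1) * (Real.log x * x ^ (α-1) * Real.exp (-(β * x)))) := by
    refine setIntegral_congr_fun measurableSet_Ioi (fun x hx => ?_)
    have hx0 : (0:ℝ) < x := hx
    rw [Real.log_mul hβ.ne' hx0.ne', Real.mul_rpow hβ.le hx0.le]
    ring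
  rw [hsplit, integral_add
      ((int_rpow_exp_integrable hβ (by linarith : (-1:ℝ) < α-1)).const_mul _)
      ((int_log_rpow_exp_integrable hα hβ).const_mul _),
    integral_const_mul, integral_const_mul, hA, hGamma', smul_eq_mul] at hg
  have hba : β ^ (α-1) * β = β ^ α := by
    rw [← Real.rpow_add_one hβ.ne' (α-1)]; congr 1; ring
  have hinv : β ^ (-α) * β ^ α = 1 := by
    rw [← Real.rpow_add hβ]; norm_num
  have h1 : β ^ (-α) * (β ^ (α-1) * β) = 1 := by rw [hba, hinv]
  set L := ∫ t in Ioi (0:ℝ), Real.log t * t ^ (α-1) * Real.exp (-(β * t)) with hL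
  -- hg : β^(α-1)*logβ*(β^(-α)*Γ) + β^(α-1)*L = β⁻¹ * Γ'
  have hg2 : β * (β ^ (α-1) * Real.log β * (β ^ (-α) * Real.Gamma α) + β ^ (α-1) * L)
      = deriv Real.Gamma α := by
    rw [hg]; field_simp
  linear_combination β ^ (-α) * hg2
    - (Real.log β * (β ^ (-α) * Real.Gamma α) + L) * h1


lemma integral_inv_subst (g : ℝ → ℝ) :
    ∫ x in Ioi (0:ℝ), x ^ (-2:ℝ) * g x⁻¹ = ∫ t in Ioi (0:ℝ), g t := by
  rw [← integral_comp_rpow_Ioi g (p := -1) (by norm_num)]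
  refine setIntegral_congr_fun measurableSet_Ioi (fun x hx => ?_)
  have hx0 : (0:ℝ) < x := hx
  rw [smul_eq_mul, Real.rpow_neg_one]
  norm_num

lemma integrableOn_inv_subst (g : ℝ → ℝ) :
    IntegrableOn (fun x => x ^ (-2:ℝ) * g x⁻¹) (Ioi (0:ℝ))
      ↔ IntegrableOn g (Ioi (0:ℝ)) := by
  rw [← integrableOn_Ioi_comp_rpow_iff g (p := -1) (by norm_num)]
  constructor <;> intro h <;>
    refine IntegrableOn.congr_fun h (fun x hx => ?_) measurableSet_Ioi <;>
    · have hx0 : (0:ℝ) < x := hx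
      rw [smul_eq_mul, Real.rpow_neg_one]
      norm_num

lemma rpow_inv_helper {x : ℝ} (hx : 0 < x) (q : ℝ) :
    x ^ (-2:ℝ) * (x⁻¹) ^ q = x ^ (-(q+2)) := by
  rw [← Real.rpow_neg_one x, ← Real.rpow_mul hx.le, ← Real.rpow_add hx]
  congr 1
  ring

-- J lemmas (inverse-gamma side)
lemma J_val {β : ℝ} (hβ : 0 < β) {q : ℝ} (hq : -1 < q) :
    ∫ s in Ioi (0:ℝ), s ^ (-(q+2)) * Real.exp (-(β * s⁻¹)) = β ^ (-(q+1)) * Real.Gamma (q+1) := by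
  rw [← int_rpow_exp_val hβ hq,
    ← integral_inv_subst (fun t => t ^ q * Real.exp (-(β * t)))]
  refine setIntegral_congr_fun measurableSet_Ioi (fun x hx => ?_)
  have hx0 : (0:ℝ) < x := hx
  rw [← rpow_inv_helper hx0 q]
  ring

lemma J_integrable {β : ℝ} (hβ : 0 < β) {q : ℝ} (hq : -1 < q) :
    IntegrableOn (fun s => s ^ (-(q+2)) * Real.exp (-(β * s⁻¹))) (Ioi (0:ℝ)) := by
  have h := (integrableOn_inv_subst (fun t => t ^ q * Real.exp (-(β * t)))).2
    (int_rpow_exp_integrable hβ hq)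
  refine IntegrableOn.congr_fun h (fun x hx => ?_) measurableSet_Ioi
  have hx0 : (0:ℝ) < x := hx
  rw [← rpow_inv_helper hx0 q]
  ring

lemma Jlog_val {α β : ℝ} (hα : 1 < α) (hβ : 0 < β) :
    ∫ s in Ioi (0:ℝ), Real.log s * s ^ (-(α+1)) * Real.exp (-(β * s⁻¹))
      = β ^ (-α) * (Real.log β * Real.Gamma α - deriv Real.Gamma α) := by
  have hval : (∫ t in Ioi (0:ℝ), -(Real.log t * t ^ (α-1) * Real.exp (-(β * t))))
      = β ^ (-α) * (Real.log β * Real.Gamma α - deriv Real.Gamma α) := by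
    rw [integral_neg, int_log_rpow_exp_val hα hβ]
    ring
  rw [← hval, ← integral_inv_subst (fun t => -(Real.log t * t ^ (α-1) * Real.exp (-(β * t))))]
  refine setIntegral_congr_fun measurableSet_Ioi (fun x hx => ?_)
  have hx0 : (0:ℝ) < x := hx
  have h2 : x ^ (-2:ℝ) * (x⁻¹) ^ (α-1) = x ^ (-(α+1)) := by
    rw [rpow_inv_helper hx0 (α-1)]
    congr 1; ring
  rw [← h2, Real.log_inv]
  ring

lemma Jlog_integrable {α β : ℝ} (hα : 1 < α) (hβ : 0 < β) :
    IntegrableOn (fun s => Real.log s * s ^ (-(α+1)) * Real.exp (-(β * s⁻¹))) (Ioi (0:ℝ)) := by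
  have h := (integrableOn_inv_subst
      (fun t => -(Real.log t * t ^ (α-1) * Real.exp (-(β * t))))).2
    (int_log_rpow_exp_integrable hα hβ).neg
  refine IntegrableOn.congr_fun h (fun x hx => ?_) measurableSet_Ioi
  have hx0 : (0:ℝ) < x := hx
  have h2 : x ^ (-2:ℝ) * (x⁻¹) ^ (α-1) = x ^ (-(α+1)) := by
    rw [rpow_inv_helper hx0 (α-1)]
    congr 1; ring
  rw [← h2, Real.log_inv]
  ring

-- Gaussian lemmas
lemma gauss_integrable0 {a : ℝ} (ha : 0 < a) :
    Integrable (fun x : ℝ => Real.exp (-(a * x^2))) := by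
  simpa [neg_mul] using integrable_exp_neg_mul_sq ha

lemma gauss_integrable1 {a : ℝ} (ha : 0 < a) :
    Integrable (fun x : ℝ => x * Real.exp (-(a * x^2))) := by
  simpa [neg_mul] using integrable_mul_exp_neg_mul_sq ha

lemma gauss_integrable2 {a : ℝ} (ha : 0 < a) :
    Integrable (fun x : ℝ => x^2 * Real.exp (-(a * x^2))) := by
  have h := integrable_rpow_mul_exp_neg_mul_sq ha (s := 2) (by norm_num)
  refine h.congr (ae_of_all _ (fun x => ?_))
  simp only [show (2:ℝ) = ((2:ℕ):ℝ) by norm_num, Real.rpow_natCast, neg_mul]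

lemma gauss_val0 {a : ℝ} (ha : 0 < a) :
    ∫ x : ℝ, Real.exp (-(a * x^2)) = Real.sqrt (π / a) := by
  simpa [neg_mul] using integral_gaussian a

lemma gauss_val1 (a : ℝ) :
    ∫ x : ℝ, x * Real.exp (-(a * x^2)) = 0 := by
  have h := integral_neg_eq_self (fun x : ℝ => x * Real.exp (-(a * x^2))) (volume : Measure ℝ)
  have h2 : (∫ x : ℝ, -x * Real.exp (-(a * (-x)^2)))
      = ∫ x : ℝ, x * Real.exp (-(a * x^2)) := h
  simp only [neg_sq] at h2
  rw [show (fun x : ℝ => -x * Real.exp (-(a * x^2)))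
      = fun x : ℝ => -(x * Real.exp (-(a * x^2))) by funext x; ring] at h2
  rw [integral_neg] at h2
  linarith

lemma gauss_val2 {a : ℝ} (ha : 0 < a) :
    ∫ x : ℝ, x^2 * Real.exp (-(a * x^2)) = Real.sqrt (π / a) / (2*a) := by
  have h1 : (∫ x : ℝ, x^2 * Real.exp (-(a * x^2)))
      = ∫ x : ℝ, |x|^2 * Real.exp (-(a * |x|^2)) := by
    congr 1; funext x; rw [sq_abs]
  rw [h1, integral_comp_abs (f := fun t => t^2 * Real.exp (-(a * t^2)))]
  have h2 : (∫ t in Ioi (0:ℝ), t^2 * Real.exp (-(a * t^2)))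
      = ∫ t in Ioi (0:ℝ), t ^ (2:ℝ) * Real.exp (-a * t ^ (2:ℝ)) := by
    refine setIntegral_congr_fun measurableSet_Ioi (fun t ht => ?_)
    rw [show (2:ℝ) = ((2:ℕ):ℝ) by norm_num, Real.rpow_natCast, neg_mul]
  rw [h2, integral_rpow_mul_exp_neg_mul_rpow two_pos (by norm_num : (-1:ℝ) < 2) ha]
  have hG : Real.Gamma ((2+1)/2) = Real.sqrt π / 2 := by
    rw [show ((2+1)/2 : ℝ) = 1/2 + 1 by norm_num, Real.Gamma_add_one (by norm_num),
      Real.Gamma_one_half_eq]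
    ring
  rw [hG]
  have ha' : a ^ (-(2+1)/2 : ℝ) = (Real.sqrt a * a)⁻¹ := by
    rw [show (-(2+1)/2 : ℝ) = -(1/2 + 1) by norm_num, Real.rpow_neg ha.le,
      Real.rpow_add ha, Real.rpow_one, ← Real.sqrt_eq_rpow]
  rw [ha', Real.sqrt_div pi_pos.le]
  have hsa : (0:ℝ) < Real.sqrt a := Real.sqrt_pos.2 ha
  field_simp

lemma inner_eq (γ ν α β : ℝ) (hν : 0 < ν) (hβ : 0 < β) (y : ℝ) {s : ℝ} (hs : 0 < s) :
    (∫ μ : ℝ, Real.log (gaussianDensity y μ s) * nigDensity μ s γ ν α β)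
      = (β ^ α / Real.Gamma α) *
        ((-(1/2) * Real.log (2*π) - 1/(2*ν)) * (s ^ (-(α+1)) * Real.exp (-(β * s⁻¹)))
         + (-(1/2)) * (Real.log s * s ^ (-(α+1)) * Real.exp (-(β * s⁻¹)))
         + (-((y-γ)^2/2)) * (s ^ (-(α+2)) * Real.exp (-(β * s⁻¹)))) := by
  have h2πs : (0:ℝ) < 2 * π * s := by positivity
  set a : ℝ := ν / (2*s) with ha_def
  have ha : 0 < a := by positivity
  set c : ℝ := y - γ with hc_def
  set C : ℝ := β ^ α / Real.Gamma α with hC_def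
  set E : ℝ := Real.exp (-(β * s⁻¹)) with hE_def
  set K : ℝ := Real.sqrt ν / Real.sqrt (2*π*s) * C * (1/s) ^ (α+1) * E with hK_def
  set c₀ : ℝ := -(1/2) * Real.log (2*π*s) with hc0_def
  set c₁ : ℝ := -(1/(2*s)) with hc1_def
  -- Step 1: pointwise rewriting of the integrand
  have key : (fun μ : ℝ => Real.log (gaussianDensity y μ s) * nigDensity μ s γ ν α β)
      = fun μ : ℝ => K * ((c₀ + c₁ * (y-μ)^2) * Real.exp (-(a * (μ-γ)^2))) := by
    funext μ
    have hlog : Real.log (gaussianDensity y μ s)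
        = c₀ + c₁ * (y-μ)^2 := by
      rw [gaussianDensity, Real.log_mul (by positivity) (Real.exp_ne_zero _),
        Real.log_rpow h2πs, Real.log_exp, hc0_def, hc1_def]
      field_simp
      try ring
    have hexp : Real.exp (-(2*β + ν*(μ-γ)^2) / (2*s))
        = E * Real.exp (-(a * (μ-γ)^2)) := by
      rw [hE_def, ← Real.exp_add]
      congr 1
      rw [ha_def]
      field_simp
      ring
    rw [hlog, nigDensity, hexp, hK_def]
    ring
  rw [key, integral_const_mul]
  -- Step 2: translation
  have htrans : (∫ μ : ℝ, (c₀ + c₁ * (y-μ)^2) * Real.exp (-(a * (μ-γ)^2)))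
      = ∫ x : ℝ, (c₀ + c₁ * (c - x)^2) * Real.exp (-(a * x^2)) := by
    rw [← integral_sub_right_eq_self (fun x => (c₀ + c₁ * (c - x)^2) * Real.exp (-(a * x^2))) γ]
    congr 1
    funext μ
    have : c - (μ - γ) = y - μ := by rw [hc_def]; ring
    rw [this]
  rw [htrans]
  -- Step 3: expand and integrate
  have hexpand : (fun x : ℝ => (c₀ + c₁ * (c - x)^2) * Real.exp (-(a * x^2)))
      = fun x : ℝ => ((c₀ + c₁ * c^2) * Real.exp (-(a * x^2))
          + (-(2*c₁*c)) * (x * Real.exp (-(a * x^2))))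
          + c₁ * (x^2 * Real.exp (-(a * x^2))) := by
    funext x
    ring
  have hi0 : Integrable (fun x : ℝ => (c₀ + c₁ * c^2) * Real.exp (-(a * x^2))) :=
    (gauss_integrable0 ha).const_mul _
  have hi1 : Integrable (fun x : ℝ => (-(2*c₁*c)) * (x * Real.exp (-(a * x^2)))) :=
    (gauss_integrable1 ha).const_mul _
  have hi2 : Integrable (fun x : ℝ => c₁ * (x^2 * Real.exp (-(a * x^2)))) :=
    (gauss_integrable2 ha).const_mul _
  have hi01 : Integrable (fun x : ℝ => (c₀ + c₁ * c^2) * Real.exp (-(a * x^2))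
      + (-(2*c₁*c)) * (x * Real.exp (-(a * x^2)))) := hi0.add hi1
  rw [hexpand, integral_add hi01 hi2, integral_add hi0 hi1,
    integral_const_mul, integral_const_mul, integral_const_mul,
    gauss_val0 ha, gauss_val1 a, gauss_val2 ha]
  -- Step 4: final algebra
  have hA : Real.sqrt (π / a) = Real.sqrt (2*π*s) / Real.sqrt ν := by
    rw [show π / a = (2*π*s) / ν by rw [ha_def]; field_simp,
      Real.sqrt_div (by positivity)]
  have hps : ((1:ℝ)/s) ^ (α+1) = (s ^ (α+1))⁻¹ := by
    rw [one_div, Real.inv_rpow hs.le]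
  have h2 : s ^ (-(α+1)) = (s ^ (α+1))⁻¹ := Real.rpow_neg hs.le _
  have h3 : s ^ (-(α+2)) = (s ^ (α+1) * s)⁻¹ := by
    rw [Real.rpow_neg hs.le]
    congr 1
    rw [← Real.rpow_add_one hs.ne']
    congr 1; ring
  have hlog2 : Real.log (2*π*s) = Real.log (2*π) + Real.log s :=
    Real.log_mul (by positivity) hs.ne'
  have hsν : Real.sqrt ν ≠ 0 := by positivity
  have hs2πs : Real.sqrt (2*π*s) ≠ 0 := by positivity
  rw [hK_def, hc0_def, hc1_def, hA, hps, h2, h3, hlog2]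
  field_simp [hs.ne', hν.ne', (Real.rpow_pos_of_pos hs (α+1)).ne']
  have hss : s * s⁻¹ = 1 := mul_inv_cancel₀ hs.ne'
  linear_combination (β ^ α * (Real.Gamma α)⁻¹ * E * Real.sqrt (2*π*s) * ν) * hss

end Helpers

section MainProof
open Set

/-- **Closed-form outer loss for regression.** For `γ ∈ ℝ`, `ν > 0`, `α > 1`, `β > 0`
and every `y ∈ ℝ`, the expected Gaussian log-likelihood under the normal-inverse-Gamma
distribution is
`∫_0^∞ ∫_ℝ log N(y | μ, σ²) · NIG(μ, σ² | γ, ν, α, β) dμ dσ²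
  = (1/2)(-(α/β)(y-γ)² - 1/ν + ψ(α) - log β - log(2π))`. -/
theorem nig_expected_gaussian_logLikelihood (γ ν α β : ℝ)
    (hν : 0 < ν) (hα : 1 < α) (hβ : 0 < β) (y : ℝ) :
    (∫ s in Set.Ioi (0 : ℝ),
        ∫ μ : ℝ, Real.log (gaussianDensity y μ s) * nigDensity μ s γ ν α β)
      = (1 / 2) * (-(α / β) * (y - γ) ^ 2 - 1 / ν + digamma α - Real.log β
          - Real.log (2 * Real.pi)) := by
  have hα0 : (0:ℝ) < α := by linarith
  have hΓ : 0 < Real.Gamma α := Real.Gamma_pos_of_pos hα0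
  have hq1 : (-1:ℝ) < α - 1 := by linarith
  have hq3 : (-1:ℝ) < α := by linarith
  -- integrability of the three pieces
  have hJ1 := J_integrable hβ hq1
  rw [show α-1+2 = α+1 by ring] at hJ1
  have hJ2 := Jlog_integrable hα hβ
  have hJ3 := J_integrable hβ hq3
  -- values
  have hV1 := J_val hβ hq1
  rw [show α-1+2 = α+1 by ring, show α-1+1 = α by ring] at hV1
  have hV2 := Jlog_val hα hβ
  have hV3 := J_val hβ hq3
  -- rewrite the outer integrand using the inner computation
  have houter : (∫ s in Ioi (0:ℝ),
        ∫ μ : ℝ, Real.log (gaussianDensity y μ s) * nigDensity μ s γ ν α β)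
      = ∫ s in Ioi (0:ℝ), (β ^ α / Real.Gamma α) *
        ((-(1/2) * Real.log (2*π) - 1/(2*ν)) * (s ^ (-(α+1)) * Real.exp (-(β * s⁻¹)))
         + (-(1/2)) * (Real.log s * s ^ (-(α+1)) * Real.exp (-(β * s⁻¹)))
         + (-((y-γ)^2/2)) * (s ^ (-(α+2)) * Real.exp (-(β * s⁻¹)))) :=
    setIntegral_congr_fun measurableSet_Ioi (fun s hs => inner_eq γ ν α β hν hβ y hs)
  rw [houter, integral_const_mul]
  have hi1 : IntegrableOn (fun s => (-(1/2) * Real.log (2*π) - 1/(2*ν)) *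
      (s ^ (-(α+1)) * Real.exp (-(β * s⁻¹)))) (Ioi (0:ℝ)) := hJ1.const_mul _
  have hi2 : IntegrableOn (fun s => (-(1/2:ℝ)) *
      (Real.log s * s ^ (-(α+1)) * Real.exp (-(β * s⁻¹)))) (Ioi (0:ℝ)) := hJ2.const_mul _
  have hi3 : IntegrableOn (fun s => (-((y-γ)^2/2)) *
      (s ^ (-(α+2)) * Real.exp (-(β * s⁻¹)))) (Ioi (0:ℝ)) := hJ3.const_mul _
  have hi12 : IntegrableOn (fun s => (-(1/2) * Real.log (2*π) - 1/(2*ν)) *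
      (s ^ (-(α+1)) * Real.exp (-(β * s⁻¹)))
      + (-(1/2:ℝ)) * (Real.log s * s ^ (-(α+1)) * Real.exp (-(β * s⁻¹)))) (Ioi (0:ℝ)) :=
    hi1.add hi2
  rw [integral_add hi12 hi3, integral_add hi1 hi2,
    integral_const_mul, integral_const_mul, integral_const_mul, hV1, hV2, hV3,
    Real.Gamma_add_one hα0.ne']
  -- final algebra
  have hb1 : β ^ (-α) = (β ^ α)⁻¹ := Real.rpow_neg hβ.le _
  have hb2 : β ^ (-(α+1)) = (β ^ α * β)⁻¹ := by
    rw [Real.rpow_neg hβ.le]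
    congr 1
    rw [← Real.rpow_add_one hβ.ne']
  rw [hb1, hb2, digamma]
  field_simp [hΓ.ne', hβ.ne', hν.ne', (Real.rpow_pos_of_pos hβ α).ne']
  ring

end MainProof
end
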